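/- Acyclicity for the π-calculus: for every finitary monadic π-term P, the translation ⟦P⟧ = (νv)(⟦P⟧_v | C(v)) is an acyclic solos term, i.e., it satisfies conditions (AC1)–(AC5). -/

import Mathlib

/-!
Every solo of `⟦P⟧_v` is reachable along `◁` from a root, an output with subject `v`: a prefix is
translated into `v̄(u w y)`, which points to `C(y)` and to the solo with subject `w`, and the latter
has an `R`-occurrence of the subject `v'` of the roots of the translated continuation `⟦P'⟧_{v'}`.
`R`-occurrences carry only names bound in `P` and fresh names drawn from the counter, each at most
once, while free names and `v` occur with protocol `S` only; a solo having such a name as object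
lies below the solo with its `R`-occurrence. These invariants, proved by induction on `P`, give
(AC1), (AC3), (AC4) and the absence of dual pairs in `⟦P⟧_v`. The catalyst `C(v)` then creates
dual pairs only on the subject `v`, which has no `R`-occurrence, so their members are roots (AC2),
and every name with an `R`-occurrence is restricted (AC5).
-/

/-- Communication protocols carried by object occurrences: Send and Receive. -/
inductive Proto : Type
  | S : Proto
  | R : Proto
deriving DecidableEq

/-- A (protocol-decorated) triadic solo: a polarity (`inp = true` for input),
a subject name and three object names each decorated with a protocol. -/
structure Solo where
  inp : Bool
  subj : ℕ
  objs : Fin 3 → ℕ × Proto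
deriving DecidableEq

/-- A solos term in canonical form: a finite set of restricted (bound) names
together with a multiset of solos in parallel. -/
structure CTerm where
  bound : Finset ℕ
  solos : Multiset Solo

/-- `x` has an object occurrence in `s`. -/
def Solo.objOcc (s : Solo) (x : ℕ) : Prop := ∃ i, (s.objs i).1 = x

/-- `x` has an `R`-occurrence in `s` (written `s ◁ x`). -/
def Solo.hasR (s : Solo) (x : ℕ) : Prop := ∃ i, s.objs i = (x, Proto.R)

/-- `x` has an `S`-occurrence in `s`. -/
def Solo.hasS (s : Solo) (x : ℕ) : Prop := ∃ i, s.objs i = (x, Proto.S)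

/-- `s ◁ t` : the subject of `t` has an `R`-occurrence in `s`. -/
def Solo.ltS (s t : Solo) : Prop := s.hasR t.subj

/-- Dual solos: same subject, opposite polarities. -/
def Dual (s t : Solo) : Prop := s.subj = t.subj ∧ s.inp ≠ t.inp

/-- `s` is a root of `P`: no solo `t` of `P` satisfies `t ◁ s`. -/
def CTerm.IsRoot (P : CTerm) (s : Solo) : Prop := ∀ t ∈ P.solos, ¬ t.ltS s

/-- The relation `◁` restricted to the solos of `P`. -/
def CTerm.lt (P : CTerm) (s t : Solo) : Prop :=
  s ∈ P.solos ∧ t ∈ P.solos ∧ s.ltS t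

/-- The number of `R`-occurrences of the name `x` in `P`. -/
def CTerm.Rocc (P : CTerm) (x : ℕ) : ℕ :=
  (P.solos.map
    (fun s => (Finset.univ.filter (fun i => s.objs i = (x, Proto.R))).card)).sum

/-- (AC1): each name has at most one `R`-occurrence. -/
def AC1 (P : CTerm) : Prop := ∀ x : ℕ, P.Rocc x ≤ 1

/-- (AC2): two dual solos are both roots. -/
def AC2 (P : CTerm) : Prop :=
  ∀ s ∈ P.solos, ∀ t ∈ P.solos, Dual s t → P.IsRoot s ∧ P.IsRoot t

/-- (AC3): `s ◁ x` and `x` occurring as object in `t` implies `s ◁* t`. -/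
def AC3 (P : CTerm) : Prop :=
  ∀ s ∈ P.solos, ∀ t ∈ P.solos, ∀ x : ℕ,
    s.hasR x → t.objOcc x → Relation.ReflTransGen P.lt s t

/-- (AC4): a solo with both an `S`- and an `R`-occurrence of a name is an input. -/
def AC4 (P : CTerm) : Prop :=
  ∀ s ∈ P.solos, ∀ x : ℕ, s.hasS x → s.hasR x → s.inp = true

/-- (AC5): no free name has an `R`-occurrence. -/
def AC5 (P : CTerm) : Prop :=
  ∀ x : ℕ, x ∉ P.bound → ∀ s ∈ P.solos, ¬ s.hasR x

/-- Acyclic solos terms: conditions (AC1)–(AC5). -/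
def Acyclic (P : CTerm) : Prop := AC1 P ∧ AC2 P ∧ AC3 P ∧ AC4 P ∧ AC5 P

/-- Applying a name substitution to a solo (protocols are preserved). -/
def applySub (σ : ℕ → ℕ) (s : Solo) : Solo :=
  ⟨s.inp, σ s.subj, fun i => (σ (s.objs i).1, (s.objs i).2)⟩

/-- `MguData σ s0 t0 P` : `σ` is a most general unifier of the objects of the
dual solos `s0` and `t0`, modifying only bound names of `P`. -/
def MguData (σ : ℕ → ℕ) (s0 t0 : Solo) (P : CTerm) : Prop :=
  (∀ i, σ (s0.objs i).1 = σ (t0.objs i).1) ∧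
  (∀ w, σ w ≠ w → w ∈ P.bound) ∧
  (∀ w, σ (σ w) = σ w) ∧
  (∀ τ : ℕ → ℕ, (∀ i, τ (s0.objs i).1 = τ (t0.objs i).1) → ∀ w, τ (σ w) = τ w)

/-- One reduction step of the solos calculus in canonical form: two dual solos
`s0` and `t0` of `P` are erased and a most general unifier of their objects,
modifying only bound names, is applied to the remaining solos (the residues). -/
def Reduces (P Q : CTerm) : Prop :=
  ∃ (s0 t0 : Solo) (σ : ℕ → ℕ),
    s0 ∈ P.solos ∧ t0 ∈ P.solos.erase s0 ∧ Dual s0 t0 ∧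
    MguData σ s0 t0 P ∧
    Q.solos = ((P.solos.erase s0).erase t0).map (applySub σ) ∧
    Q.bound = P.bound.filter (fun w => σ w = w)

/-- Finitary monadic π-terms: `0`, input prefix `u(x).P`, output prefix
`ū⟨x⟩.P`, parallel composition and restriction `(νx)P`. -/
inductive Pi : Type
  | nil : Pi
  | inp (u x : ℕ) (P : Pi) : Pi
  | out (u x : ℕ) (P : Pi) : Pi
  | par (P Q : Pi) : Pi
  | nu (x : ℕ) (P : Pi) : Pi

/-- Free names of a π-term. -/
def Pi.fn : Pi → Finset ℕ
  | .nil => ∅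
  | .inp u x P => insert u (P.fn.erase x)
  | .out u x P => insert u (insert x P.fn)
  | .par P Q => P.fn ∪ Q.fn
  | .nu x P => P.fn.erase x

/-- All names (free or bound) occurring in a π-term. -/
def Pi.names : Pi → Finset ℕ
  | .nil => ∅
  | .inp u x P => insert u (insert x P.names)
  | .out u x P => insert u (insert x P.names)
  | .par P Q => P.names ∪ Q.names
  | .nu x P => insert x P.names

/-- Bound names of a π-term. -/
def Pi.bn : Pi → Finset ℕ
  | .nil => ∅
  | .inp _ x P => insert x P.bn
  | .out _ _ P => P.bn
  | .par P Q => P.bn ∪ Q.bn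
  | .nu x P => insert x P.bn

/-- A π-term has `Good` names when its binders are pairwise distinct and do not
clash across parallel components (names "as different as possible", obtainable
by α-conversion). -/
def Pi.Good : Pi → Prop
  | .nil => True
  | .inp _ x P => P.Good ∧ x ∉ P.bn
  | .out _ _ P => P.Good
  | .par P Q => P.Good ∧ Q.Good ∧ Disjoint P.bn Q.bn ∧
      Disjoint P.bn Q.fn ∧ Disjoint Q.bn P.fn
  | .nu x P => P.Good ∧ x ∉ P.bn

/-- The decorated translation of the catalyst `C(v) = (νz) v(z^R z^S v^S)`. -/
def catSolo (v z : ℕ) : Solo := ⟨true, v, ![(z, Proto.R), (z, Proto.S), (v, Proto.S)]⟩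

/-- The protocol-decorated translation `⟦P⟧_v` of a π-term into a canonical
solos term, using a counter `c` as supply of fresh names (the translation
returns the term together with the next value of the counter):
`⟦u(x).P⟧_v = (νw)(νy)( v̄(u^S w^R y^R) | C(y) | (νx)(νv')( w(x^R v^S v'^R) | ⟦P⟧_{v'} ))`,
`⟦ū⟨x⟩.P⟧_v = (νw)(νy)( v̄(u^S w^R y^R) | C(y) | (νv')( w̄(x^S v'^R v^S) | ⟦P⟧_{v'} ))`,
and homomorphically for `0`, parallel composition and restriction. -/
def dtrans : Pi → ℕ → ℕ → CTerm × ℕ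
  | .nil, _, c => (⟨∅, 0⟩, c)
  | .inp u x P, v, c =>
      let w := c; let y := c + 1; let z := c + 2; let v' := c + 3
      let r := dtrans P v' (c + 4)
      (⟨insert w (insert y (insert z (insert x (insert v' r.1.bound)))),
        (⟨false, v, ![(u, Proto.S), (w, Proto.R), (y, Proto.R)]⟩ : Solo) ::ₘ
          catSolo y z ::ₘ
          (⟨true, w, ![(x, Proto.R), (v, Proto.S), (v', Proto.R)]⟩ : Solo) ::ₘ
          r.1.solos⟩, r.2)
  | .out u x P, v, c =>
      let w := c; let y := c + 1; let z := c + 2; let v' := c + 3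
      let r := dtrans P v' (c + 4)
      (⟨insert w (insert y (insert z (insert v' r.1.bound))),
        (⟨false, v, ![(u, Proto.S), (w, Proto.R), (y, Proto.R)]⟩ : Solo) ::ₘ
          catSolo y z ::ₘ
          (⟨false, w, ![(x, Proto.S), (v', Proto.R), (v, Proto.S)]⟩ : Solo) ::ₘ
          r.1.solos⟩, r.2)
  | .par P Q, v, c =>
      let a := dtrans P v c
      let b := dtrans Q v a.2
      (⟨a.1.bound ∪ b.1.bound, a.1.solos + b.1.solos⟩, b.2)
  | .nu x P, v, c =>
      let a := dtrans P v c
      (⟨insert x a.1.bound, a.1.solos⟩, a.2)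

/-- The decorated translation `⟦P⟧ = (νv)(⟦P⟧_v | C(v))` of a π-term, the fresh
names being taken above the counter `c`. -/
def dtransTop (P : Pi) (c : ℕ) : CTerm :=
  let v := c; let z := c + 1
  let a := (dtrans P v (c + 2)).1
  ⟨insert v (insert z a.bound), catSolo v z ::ₘ a.solos⟩

namespace Solo

@[simp] lemma hasR_mk {b : Bool} {a n : ℕ} {p q r : ℕ × Proto} :
    (Solo.mk b a ![p, q, r]).hasR n ↔ p = (n, .R) ∨ q = (n, .R) ∨ r = (n, .R) := by
  simp [Solo.hasR, Fin.exists_fin_succ]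

@[simp] lemma hasS_mk {b : Bool} {a n : ℕ} {p q r : ℕ × Proto} :
    (Solo.mk b a ![p, q, r]).hasS n ↔ p = (n, .S) ∨ q = (n, .S) ∨ r = (n, .S) := by
  simp [Solo.hasS, Fin.exists_fin_succ]

@[simp] lemma objOcc_mk {b : Bool} {a n : ℕ} {p q r : ℕ × Proto} :
    (Solo.mk b a ![p, q, r]).objOcc n ↔ p.1 = n ∨ q.1 = n ∨ r.1 = n := by
  simp [Solo.objOcc, Fin.exists_fin_succ]

def countR (s : Solo) (x : ℕ) : ℕ := (Finset.univ.filter (fun i => s.objs i = (x, Proto.R))).card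

lemma countR_mk (b : Bool) (a : ℕ) (p q r : ℕ × Proto) (x : ℕ) :
    (Solo.mk b a ![p, q, r]).countR x = (if p = (x, .R) then 1 else 0) +
      (if q = (x, .R) then 1 else 0) + (if r = (x, .R) then 1 else 0) := by
  rw [countR, Finset.card_filter, Fin.sum_univ_three]
  rfl

end Solo

lemma Pi.bn_subset_names (P : Pi) : P.bn ⊆ P.names := by
  induction P <;> intro n <;>
    simp only [Pi.bn, Pi.names, Finset.mem_insert, Finset.mem_union] <;> grind

lemma Pi.names_subset_fn_union_bn (P : Pi) : P.names ⊆ P.fn ∪ P.bn := by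
  induction P <;> intro n <;>
    simp only [Pi.fn, Pi.bn, Pi.names, Finset.mem_insert, Finset.mem_union, Finset.mem_erase] <;>
    grind

lemma Pi.disjoint_names {s : Finset ℕ} {P : Pi} (hf : Disjoint s P.fn) (hb : Disjoint s P.bn) :
    Disjoint s P.names :=
  Finset.disjoint_of_subset_right P.names_subset_fn_union_bn
    (Finset.disjoint_union_right.2 ⟨hf, hb⟩)

namespace CTerm

lemma reflTransGen_lt_mono {A B : CTerm} (h : A.solos ⊆ B.solos) {s t : Solo}
    (hst : Relation.ReflTransGen A.lt s t) : Relation.ReflTransGen B.lt s t :=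
  Relation.ReflTransGen.mono (fun _ _ hab => ⟨h hab.1, h hab.2.1, hab.2.2⟩) s t hst

lemma Rocc_mk_cons (b : Finset ℕ) (s : Solo) (m : Multiset Solo) (x : ℕ) :
    (mk b (s ::ₘ m)).Rocc x = s.countR x + (mk b m).Rocc x := by
  simp [Rocc, Solo.countR]

lemma Rocc_mk_add (b : Finset ℕ) (m₁ m₂ : Multiset Solo) (x : ℕ) :
    (mk b (m₁ + m₂)).Rocc x = (mk b m₁).Rocc x + (mk b m₂).Rocc x := by
  simp [Rocc]

lemma Rocc_eq_zero {A : CTerm} {x : ℕ} (h : ∀ s ∈ A.solos, ¬ s.hasR x) : A.Rocc x = 0 := by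
  refine Multiset.sum_eq_zero fun n hn => ?_
  obtain ⟨s, hs, rfl⟩ := Multiset.mem_map.1 hn
  simpa [Finset.filter_eq_empty_iff] using fun i hi => h s hs ⟨i, hi⟩

lemma ac1_cons {b b' : Finset ℕ} {s : Solo} {m : Multiset Solo} (hm : AC1 ⟨b', m⟩)
    (hs : ∀ x, s.countR x ≤ 1) (hdisj : ∀ x, s.hasR x → ∀ t ∈ m, ¬ t.hasR x) :
    AC1 ⟨b, s ::ₘ m⟩ := by
  intro x
  rw [Rocc_mk_cons]
  by_cases hx : s.hasR x
  · rw [show (mk b m).Rocc x = 0 from Rocc_eq_zero (hdisj x hx)]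
    exact hs x
  · have : s.countR x = 0 := by
      simpa [Solo.countR, Finset.filter_eq_empty_iff] using fun i hi => hx ⟨i, hi⟩
    rw [this, zero_add]
    exact hm x

lemma ac1_add {b b₁ b₂ : Finset ℕ} {m₁ m₂ : Multiset Solo} (h₁ : AC1 ⟨b₁, m₁⟩)
    (h₂ : AC1 ⟨b₂, m₂⟩) (hdisj : ∀ s ∈ m₁, ∀ x, s.hasR x → ∀ t ∈ m₂, ¬ t.hasR x) :
    AC1 ⟨b, m₁ + m₂⟩ := by
  intro x
  rw [Rocc_mk_add]
  by_cases hx : ∀ s ∈ m₁, ¬ s.hasR x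
  · rw [show (mk b m₁).Rocc x = 0 from Rocc_eq_zero hx, zero_add]
    exact h₂ x
  · obtain ⟨s, hs, hsx⟩ := not_forall₂.1 hx
    rw [show (mk b m₂).Rocc x = 0 from Rocc_eq_zero (hdisj s hs x (not_not.1 hsx))]
    exact h₁ x

lemma ac3_cons {b b' : Finset ℕ} {s : Solo} {m : Multiset Solo} (hm : AC3 ⟨b', m⟩)
    (hdown : ∀ x, s.hasR x → ∀ t ∈ m, t.objOcc x →
      Relation.ReflTransGen (mk b (s ::ₘ m)).lt s t)
    (hup : ∀ t ∈ m, ∀ x, t.hasR x → ¬ s.objOcc x) : AC3 ⟨b, s ::ₘ m⟩ := by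
  intro s₁ hs₁ t ht x hR hO
  rcases Multiset.mem_cons.1 hs₁ with rfl | hsm <;> rcases Multiset.mem_cons.1 ht with rfl | htm
  · exact .refl
  · exact hdown x hR t htm hO
  · exact absurd hO (hup s₁ hsm x hR)
  · exact reflTransGen_lt_mono (Multiset.subset_cons m s) (hm s₁ hsm t htm x hR hO)

lemma ac3_add {b b₁ b₂ : Finset ℕ} {m₁ m₂ : Multiset Solo} (h₁ : AC3 ⟨b₁, m₁⟩)
    (h₂ : AC3 ⟨b₂, m₂⟩) (h₁₂ : ∀ s ∈ m₁, ∀ x, s.hasR x → ∀ t ∈ m₂, ¬ t.objOcc x)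
    (h₂₁ : ∀ s ∈ m₂, ∀ x, s.hasR x → ∀ t ∈ m₁, ¬ t.objOcc x) : AC3 ⟨b, m₁ + m₂⟩ := by
  intro s hs t ht x hR hO
  rcases Multiset.mem_add.1 hs with hs | hs <;> rcases Multiset.mem_add.1 ht with ht | ht
  · exact reflTransGen_lt_mono (Multiset.subset_of_le (Multiset.le_add_right _ _))
      (h₁ s hs t ht x hR hO)
  · exact absurd hO (h₁₂ s hs x hR t ht)
  · exact absurd hO (h₂₁ s hs x hR t ht)
  · exact reflTransGen_lt_mono (Multiset.subset_of_le (Multiset.le_add_left _ _))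
      (h₂ s hs t ht x hR hO)

end CTerm

/- The three solos `v̄(u^S w^R y^R) | C(y) | s` that `dtrans` puts in front of the translation of
the continuation of a prefix, with `w = c`, `y = c + 1` and `s` the solo with subject `w`. -/
lemma ac1_prefix {b b' : Finset ℕ} {u v c : ℕ} {s : Solo} {m : Multiset Solo}
    (hm : AC1 ⟨b', m⟩) (hs : ∀ y, s.countR y ≤ 1)
    (hsR : ∀ y, s.hasR y → (y < c ∨ y = c + 3) ∧ ∀ t ∈ m, ¬ t.hasR y)
    (hmR : ∀ t ∈ m, ∀ y, t.hasR y → y < c ∨ c + 4 ≤ y) :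
    AC1 ⟨b, ⟨false, v, ![(u, .S), (c, .R), (c + 1, .R)]⟩ ::ₘ catSolo (c + 1) (c + 2) ::ₘ s ::ₘ
      m⟩ := by
  refine CTerm.ac1_cons (b' := ∅) (CTerm.ac1_cons (b' := ∅) (CTerm.ac1_cons hm hs
    fun y hy => (hsR y hy).2) ?_ ?_) ?_ ?_
  · intro y; simp only [catSolo, Solo.countR_mk, Prod.mk.injEq]; split_ifs <;> simp_all
  · intro y hy t ht hty
    simp [catSolo] at hy
    rcases Multiset.mem_cons.1 ht with rfl | ht
    · have := hsR y hty; omega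
    · have := hmR t ht y hty; omega
  · intro y
    simp only [Solo.countR_mk, Prod.mk.injEq, reduceCtorEq, and_true, and_false, if_false]
    split_ifs <;> omega
  · intro y hy t ht hty
    simp at hy
    simp only [Multiset.mem_cons] at ht
    rcases ht with rfl | rfl | ht
    · simp [catSolo] at hty; omega
    · have := hsR y hty; omega
    · have := hmR t ht y hty; omega

lemma ac3_prefix {b b' : Finset ℕ} {u v c : ℕ} {s : Solo} {m : Multiset Solo}
    (hu : u < c) (hm : AC3 ⟨b', m⟩) (hs : s.hasR (c + 3))
    (hroot : ∀ t ∈ m, ∃ r ∈ m, r.subj = c + 3 ∧ Relation.ReflTransGen (CTerm.mk b' m).lt r t)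
    (hsR : ∀ y, s.hasR y → y < c ∧ y ≠ u ∨ y = c + 3)
    (hsO : ∀ y, s.objOcc y → y < c ∨ y = c + 3)
    (hmR : ∀ t ∈ m, ∀ y, t.hasR y → y < c ∧ y ≠ u ∧ ¬ s.objOcc y ∨ c + 4 ≤ y)
    (hmO : ∀ t ∈ m, ∀ y, t.objOcc y → y < c ∨ c + 3 ≤ y) :
    AC3 ⟨b, ⟨false, v, ![(u, .S), (c, .R), (c + 1, .R)]⟩ ::ₘ catSolo (c + 1) (c + 2) ::ₘ s ::ₘ
      m⟩ := by
  refine CTerm.ac3_cons (b' := ∅) (CTerm.ac3_cons (b' := ∅) (CTerm.ac3_cons hm ?_ ?_) ?_ ?_) ?_ ?_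
  · intro y _ t ht _
    obtain ⟨r, hr, hrc, hrt⟩ := hroot t ht
    exact .head ⟨Multiset.mem_cons_self _ _, Multiset.mem_cons_of_mem hr,
      show s.hasR r.subj from hrc ▸ hs⟩
      (CTerm.reflTransGen_lt_mono (Multiset.subset_cons _ _) hrt)
  · intro t ht y hy hO
    rcases hmR t ht y hy with h | h
    · exact h.2.2 hO
    · have := hsO y hO; omega
  · intro y hy t ht hO
    simp [catSolo] at hy
    rcases Multiset.mem_cons.1 ht with rfl | ht
    · have := hsO y hO; omega
    · have := hmO t ht y hO; omega
  · intro t ht y hy hO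
    simp [catSolo] at hO
    rcases Multiset.mem_cons.1 ht with rfl | ht
    · have := hsR y hy; omega
    · have := hmR t ht y hy; omega
  · intro y hy t ht hO
    simp at hy
    simp only [Multiset.mem_cons] at ht
    rcases ht with rfl | rfl | ht
    · simp [catSolo] at hO
      obtain rfl : y = c + 1 := by omega
      exact .single ⟨by simp, by simp, by simp [Solo.ltS, catSolo]⟩
    · have := hsO y hO; omega
    · have := hmO t ht y hO; omega
  · intro t ht y hy hO
    simp at hO
    simp only [Multiset.mem_cons] at ht
    rcases ht with rfl | rfl | ht
    · simp [catSolo] at hy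
      omega
    · have := hsR y hy; omega
    · have := hmR t ht y hy; omega

lemma acyclic_catSolo_cons {A : CTerm} {v z : ℕ} (hvz : v ≠ z) (h1 : AC1 A) (h3 : AC3 A)
    (h4 : AC4 A) (hnd : ∀ s ∈ A.solos, ∀ t ∈ A.solos, ¬ Dual s t)
    (hR : ∀ s ∈ A.solos, ∀ y, s.hasR y → y ∈ A.bound ∧ y ≠ v ∧ y ≠ z)
    (hO : ∀ s ∈ A.solos, ¬ s.objOcc z) :
    Acyclic ⟨insert v (insert z A.bound), catSolo v z ::ₘ A.solos⟩ := by
  have hroot : ∀ s : Solo, s.subj = v →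
      CTerm.IsRoot ⟨insert v (insert z A.bound), catSolo v z ::ₘ A.solos⟩ s := by
    intro s hs t ht hts
    rw [Solo.ltS, hs] at hts
    rcases Multiset.mem_cons.1 ht with rfl | ht
    · simp [catSolo] at hts; omega
    · exact (hR t ht v hts).2.1 rfl
  refine ⟨?_, ?_, ?_, ?_, ?_⟩
  · refine CTerm.ac1_cons h1 (fun y => ?_) fun y hy t ht hty => (hR t ht y hty).2.2 ?_
    · simp only [catSolo, Solo.countR_mk]; split_ifs <;> simp_all
    · simpa [catSolo, eq_comm] using hy
  · intro s hs t ht hst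
    have hsv : s.subj = v := by
      rcases Multiset.mem_cons.1 hs with rfl | hs
      · rfl
      rcases Multiset.mem_cons.1 ht with rfl | ht
      · exact hst.1
      · exact absurd hst (hnd s hs t ht)
    exact ⟨hroot s hsv, hroot t (hst.1 ▸ hsv)⟩
  · refine CTerm.ac3_cons h3 (fun y hy t ht hty => ?_) fun t ht y hy hO' => ?_
    · obtain rfl : z = y := by simpa [catSolo] using hy
      exact (hO t ht hty).elim
    · have := hR t ht y hy; simp [catSolo] at hO'; omega
  · intro s hs y hS hR'
    rcases Multiset.mem_cons.1 hs with rfl | hs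
    · rfl
    · exact h4 s hs y hS hR'
  · intro y hy s hs hsy
    rcases Multiset.mem_cons.1 hs with rfl | hs
    · obtain rfl : z = y := by simpa [catSolo] using hsy
      exact hy (Finset.mem_insert_of_mem (Finset.mem_insert_self z _))
    · exact hy (Finset.mem_insert_of_mem (Finset.mem_insert_of_mem (hR s hs y hsy).1))

lemma le_dtrans_snd (P : Pi) (v c : ℕ) : c ≤ (dtrans P v c).2 := by
  induction P generalizing v c with
  | nil => exact le_rfl
  | inp _ _ P ih | out _ _ P ih => exact (Nat.le_add_right c 4).trans (ih _ _)
  | par P Q ihP ihQ => exact (ihP v c).trans (ihQ v _)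
  | nu _ P ih => exact ih v c

lemma mem_dtrans_bound {P : Pi} {v c n : ℕ} (hn : n ∈ P.bn ∨ c ≤ n ∧ n < (dtrans P v c).2) :
    n ∈ (dtrans P v c).1.bound := by
  induction P generalizing v c with
  | nil => simp [Pi.bn, dtrans] at hn; omega
  | inp u x P ih | out u x P ih =>
    have := @ih (c + 3) (c + 4)
    simp only [dtrans, Pi.bn, Finset.mem_insert] at hn this ⊢
    grind
  | par P Q ihP ihQ =>
    have := @ihP v c
    have := @ihQ v (dtrans P v c).2
    simp only [dtrans, Pi.bn, Finset.mem_union] at hn this ⊢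
    grind
  | nu _ P ih =>
    have := @ih v c
    simp only [dtrans, Pi.bn, Finset.mem_insert] at hn this ⊢
    grind

lemma hasR_dtrans {P : Pi} {v c : ℕ} {s : Solo} (hs : s ∈ (dtrans P v c).1.solos) {n : ℕ}
    (hn : s.hasR n) : n ∈ P.bn ∨ c ≤ n ∧ n < (dtrans P v c).2 := by
  induction P generalizing v c with
  | nil => simp [dtrans] at hs
  | inp u x P ih | out u x P ih =>
    have := le_dtrans_snd P (c + 3) (c + 4)
    simp only [dtrans, Multiset.mem_cons] at hs ⊢
    rcases hs with rfl | rfl | rfl | hs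
    · simp at hn; omega
    · simp [catSolo] at hn; omega
    · simp at hn; simp [Pi.bn]; omega
    · rcases ih hs with h | h
      · simp [Pi.bn, h]
      · omega
  | par P Q ihP ihQ =>
    have := le_dtrans_snd P v c
    have := le_dtrans_snd Q v (dtrans P v c).2
    simp only [dtrans, Multiset.mem_add] at hs ⊢
    rcases hs with hs | hs
    · rcases ihP hs with h | h
      · simp [Pi.bn, h]
      · omega
    · rcases ihQ hs with h | h
      · simp [Pi.bn, h]
      · omega
  | nu _ P ih => rcases ih hs with h | h <;> simp [Pi.bn, dtrans, h]

lemma objOcc_dtrans {P : Pi} {v c : ℕ} {s : Solo} (hs : s ∈ (dtrans P v c).1.solos) {n : ℕ}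
    (hn : s.objOcc n) : n ∈ P.names ∨ c ≤ n ∧ n < (dtrans P v c).2 ∨ n = v := by
  induction P generalizing v c with
  | nil => simp [dtrans] at hs
  | inp u x P ih | out u x P ih =>
    have := le_dtrans_snd P (c + 3) (c + 4)
    simp only [dtrans, Multiset.mem_cons] at hs ⊢
    rcases hs with rfl | rfl | rfl | hs
    · simp at hn; simp [Pi.names]; omega
    · simp [catSolo] at hn; omega
    · simp at hn; simp [Pi.names]; omega
    · rcases ih hs with h | h | h
      · simp [Pi.names, h]
      · omega
      · omega
  | par P Q ihP ihQ =>
    have := le_dtrans_snd P v c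
    have := le_dtrans_snd Q v (dtrans P v c).2
    simp only [dtrans, Multiset.mem_add] at hs ⊢
    rcases hs with hs | hs
    · rcases ihP hs with h | h | h
      · simp [Pi.names, h]
      · omega
      · omega
    · rcases ihQ hs with h | h | h
      · simp [Pi.names, h]
      · omega
      · omega
  | nu _ P ih => rcases ih hs with h | h | h <;> simp [Pi.names, dtrans, h]

lemma subj_dtrans {P : Pi} {v c : ℕ} {s : Solo} (hs : s ∈ (dtrans P v c).1.solos) :
    s.subj = v ∧ s.inp = false ∨ c ≤ s.subj ∧ s.subj < (dtrans P v c).2 := by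
  induction P generalizing v c with
  | nil => simp [dtrans] at hs
  | inp u x P ih | out u x P ih =>
    have := le_dtrans_snd P (c + 3) (c + 4)
    simp only [dtrans, Multiset.mem_cons] at hs ⊢
    rcases hs with rfl | rfl | rfl | hs
    · simp
    · simp [catSolo]; omega
    · simp; omega
    · have := ih hs; omega
  | par P Q ihP ihQ =>
    have := le_dtrans_snd P v c
    have := le_dtrans_snd Q v (dtrans P v c).2
    simp only [dtrans, Multiset.mem_add] at hs ⊢
    rcases hs with hs | hs
    · have := ihP hs; grind
    · have := ihQ hs; grind
  | nu _ P ih => exact ih hs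

lemma exists_root_dtrans {P : Pi} {v c : ℕ} {t : Solo} (ht : t ∈ (dtrans P v c).1.solos) :
    ∃ r ∈ (dtrans P v c).1.solos, r.subj = v ∧ Relation.ReflTransGen (dtrans P v c).1.lt r t := by
  induction P generalizing v c with
  | nil => simp [dtrans] at ht
  | inp u x P ih | out u x P ih =>
    simp only [dtrans] at ht ⊢
    refine ⟨_, Multiset.mem_cons_self _ _, rfl, ?_⟩
    rcases Multiset.mem_cons.1 ht with rfl | ht
    · exact .refl
    rcases Multiset.mem_cons.1 ht with rfl | ht
    · exact .single ⟨by simp, by simp, by simp [Solo.ltS, catSolo]⟩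
    rcases Multiset.mem_cons.1 ht with rfl | ht
    · exact .single ⟨by simp, by simp, by simp [Solo.ltS]⟩
    obtain ⟨r, hr, hrv, hrt⟩ := ih ht
    refine .head ⟨by simp,
      Multiset.mem_cons_of_mem (Multiset.mem_cons_of_mem (Multiset.mem_cons_self _ _)),
      by simp [Solo.ltS]⟩ (.head ⟨by simp, by simp [hr], ?_⟩
      (CTerm.reflTransGen_lt_mono (fun _ h => by simp [h]) hrt))
    simp [Solo.ltS, hrv]
  | par P Q ihP ihQ =>
    simp only [dtrans] at ht ⊢
    rcases Multiset.mem_add.1 ht with ht | ht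
    · obtain ⟨r, hr, hrv, hrt⟩ := ihP ht
      exact ⟨r, Multiset.mem_add.2 (.inl hr), hrv,
        CTerm.reflTransGen_lt_mono (Multiset.subset_of_le (Multiset.le_add_right _ _)) hrt⟩
    · obtain ⟨r, hr, hrv, hrt⟩ := ihQ ht
      exact ⟨r, Multiset.mem_add.2 (.inr hr), hrv,
        CTerm.reflTransGen_lt_mono (Multiset.subset_of_le (Multiset.le_add_left _ _)) hrt⟩
  | nu _ P ih => exact ih ht

lemma not_dual_dtrans {P : Pi} {v c : ℕ} (hv : v < c) {s t : Solo}
    (hs : s ∈ (dtrans P v c).1.solos) (ht : t ∈ (dtrans P v c).1.solos) : ¬ Dual s t := by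
  rintro ⟨hst, hpol⟩
  induction P generalizing v c with
  | nil => simp [dtrans] at hs
  | inp u x P ih | out u x P ih =>
    simp only [dtrans, Multiset.mem_cons] at hs ht
    rcases hs with rfl | rfl | rfl | hs <;> rcases ht with rfl | rfl | rfl | ht
    all_goals first
      | exact hpol rfl
      | exact ih (by omega) hs ht
      | (have := subj_dtrans ‹_ ∈ (dtrans P (c + 3) (c + 4)).1.solos›
         simp only [catSolo] at hst; omega)
      | (simp only [catSolo] at hst; omega)
  | par P Q ihP ihQ =>
    have := le_dtrans_snd P v c
    simp only [dtrans, Multiset.mem_add] at hs ht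
    rcases hs with hs | hs <;> rcases ht with ht | ht
    · exact ihP hv hs ht
    · have := subj_dtrans hs; have := subj_dtrans ht; grind
    · have := subj_dtrans hs; have := subj_dtrans ht; grind
    · exact ihQ (by omega) hs ht
  | nu _ P ih => exact ih hv hs ht

lemma ac4_dtrans {P : Pi} {v c : ℕ} (hv : v < c) (hn : ∀ x ∈ P.names, x < c) :
    AC4 (dtrans P v c).1 := by
  intro s hs y hS hR
  induction P generalizing v c with
  | nil => simp [dtrans] at hs
  | inp u x P ih | out u x P ih =>
    have hu : u < c := hn u (by simp [Pi.names])
    have hx : x < c := hn x (by simp [Pi.names])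
    simp only [dtrans, Multiset.mem_cons] at hs
    rcases hs with rfl | rfl | rfl | hs
    · simp at hS hR; omega
    · rfl
    · simp at hS hR ⊢ <;> omega
    · exact ih (by omega) (fun y hy => (hn y (by simp [Pi.names, hy])).trans (by omega)) hs
  | par P Q ihP ihQ =>
    have := le_dtrans_snd P v c
    simp only [dtrans, Multiset.mem_add] at hs
    rcases hs with hs | hs
    · exact ihP hv (fun y hy => hn y (by simp [Pi.names, hy])) hs
    · exact ihQ (by omega) (fun y hy => (hn y (by simp [Pi.names, hy])).trans_le this) hs
  | nu _ P ih => exact ih hv (fun y hy => hn y (by simp [Pi.names, hy])) hs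

lemma ac1_dtrans_prefix {b : Finset ℕ} {P : Pi} {u v c : ℕ} {s : Solo}
    (hP : AC1 (dtrans P (c + 3) (c + 4)).1) (hbn : ∀ y ∈ P.bn, y < c) (hs : ∀ y, s.countR y ≤ 1)
    (hsR : ∀ y, s.hasR y → y < c ∧ y ∉ P.bn ∨ y = c + 3) :
    AC1 ⟨b, ⟨false, v, ![(u, .S), (c, .R), (c + 1, .R)]⟩ ::ₘ catSolo (c + 1) (c + 2) ::ₘ s ::ₘ
      (dtrans P (c + 3) (c + 4)).1.solos⟩ := by
  have hR : ∀ t ∈ (dtrans P (c + 3) (c + 4)).1.solos, ∀ y, t.hasR y →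
      y < c ∧ y ∈ P.bn ∨ c + 4 ≤ y := fun t ht y hy =>
    (hasR_dtrans ht hy).imp (fun h => ⟨hbn y h, h⟩) And.left
  refine ac1_prefix hP hs ?_ fun t ht y hy => (hR t ht y hy).imp_left And.left
  intro y hy
  refine ⟨(hsR y hy).imp_left And.left, fun t ht hty => ?_⟩
  rcases hR t ht y hty with h' | h' <;> rcases hsR y hy with h | rfl
  · exact h.2 h'.2
  all_goals omega

lemma ac1_dtrans {P : Pi} {v c : ℕ} (hg : P.Good) (hn : ∀ x ∈ P.names, x < c) :
    AC1 (dtrans P v c).1 := by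
  induction P generalizing v c with
  | nil => intro x; simp [dtrans, CTerm.Rocc]
  | inp u x P ih =>
    have hnP : ∀ y ∈ P.names, y < c := fun y hy => hn y (by simp [Pi.names, hy])
    have hx : x < c := hn x (by simp [Pi.names])
    refine ac1_dtrans_prefix (ih hg.1 fun y hy => (hnP y hy).trans (by omega))
      (fun y h => hnP y (Pi.bn_subset_names P h)) ?_ ?_
    · intro y
      simp only [Solo.countR_mk, Prod.mk.injEq, reduceCtorEq, and_true, and_false, if_false]
      split_ifs <;> omega
    · intro y hy
      simp only [Solo.hasR_mk, Prod.mk.injEq, reduceCtorEq, and_true, and_false, false_or] at hy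
      rcases hy with rfl | rfl
      exacts [.inl ⟨hx, hg.2⟩, .inr rfl]
  | out u x P ih =>
    have hnP : ∀ y ∈ P.names, y < c := fun y hy => hn y (by simp [Pi.names, hy])
    refine ac1_dtrans_prefix (ih hg fun y hy => (hnP y hy).trans (by omega))
      (fun y h => hnP y (Pi.bn_subset_names P h)) ?_ ?_
    · intro y; simp only [Solo.countR_mk]; split_ifs <;> simp_all
    · intro y hy; simp at hy; exact .inr hy.symm
  | par P Q ihP ihQ =>
    have := le_dtrans_snd P v c
    refine CTerm.ac1_add (ihP hg.1 fun y hy => hn y (by simp [Pi.names, hy]))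
      (ihQ hg.2.1 fun y hy => (hn y (by simp [Pi.names, hy])).trans_le this) ?_
    intro s hs y hsy t ht hty
    rcases hasR_dtrans hs hsy with h | h <;> rcases hasR_dtrans ht hty with h' | h'
    · exact Finset.disjoint_left.1 hg.2.2.1 h h'
    · have := hn y (by simp [Pi.names, Pi.bn_subset_names P h]); omega
    · have := hn y (by simp [Pi.names, Pi.bn_subset_names Q h']); omega
    · omega
  | nu _ P ih => exact ih hg.1 (fun y hy => hn y (by simp [Pi.names, hy]))

lemma ac3_dtrans_prefix {b : Finset ℕ} {P : Pi} {u v c : ℕ} {s : Solo}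
    (hP : AC3 (dtrans P (c + 3) (c + 4)).1) (hnP : ∀ y ∈ P.names, y < c) (hu : u < c)
    (hub : u ∉ P.bn) (hs : s.hasR (c + 3)) (hsR : ∀ y, s.hasR y → y < c ∧ y ≠ u ∨ y = c + 3)
    (hsO : ∀ y, s.objOcc y → y < c ∧ y ∉ P.bn ∨ y = c + 3) :
    AC3 ⟨b, ⟨false, v, ![(u, .S), (c, .R), (c + 1, .R)]⟩ ::ₘ catSolo (c + 1) (c + 2) ::ₘ s ::ₘ
      (dtrans P (c + 3) (c + 4)).1.solos⟩ := by
  refine ac3_prefix hu hP hs (fun t ht => exists_root_dtrans ht) hsR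
    (fun y hy => (hsO y hy).imp_left And.left) ?_ ?_
  · intro t ht y hy
    rcases hasR_dtrans ht hy with h | h
    · refine .inl ⟨hnP y (Pi.bn_subset_names P h), fun h' => hub (h' ▸ h), fun hO => ?_⟩
      rcases hsO y hO with h' | h'
      · exact h'.2 h
      · have := hnP y (Pi.bn_subset_names P h); omega
    · exact .inr h.1
  · intro t ht y hy
    rcases objOcc_dtrans ht hy with h | h | h
    · exact .inl (hnP y h)
    · omega
    · omega

lemma ac3_dtrans_inp {P : Pi} {u x v c : ℕ} (hP : AC3 (dtrans P (c + 3) (c + 4)).1)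
    (hg : (Pi.inp u x P).Good) (hd : Disjoint (Pi.inp u x P).bn (Pi.inp u x P).fn)
    (hnv : ∀ y ∈ (Pi.inp u x P).names, y < v) (hv : v < c) :
    AC3 (dtrans (.inp u x P) v c).1 := by
  have hn : ∀ y ∈ (Pi.inp u x P).names, y < c := fun y hy => (hnv y hy).trans hv
  simp only [Pi.bn, Pi.fn, Finset.disjoint_left, Finset.mem_insert, Finset.mem_erase] at hd
  have hux : u ≠ x := fun h => hd (.inl h) (.inl rfl)
  refine ac3_dtrans_prefix hP (fun y hy => hn y (by simp [Pi.names, hy]))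
    (hn u (by simp [Pi.names])) (fun h => hd (.inr h) (.inl rfl)) (by simp) ?_ ?_
  · intro y hy; have := hn x (by simp [Pi.names]); simp at hy; omega
  · intro y hy
    simp only [Solo.objOcc_mk] at hy
    rcases hy with rfl | rfl | rfl
    · exact .inl ⟨hn _ (by simp [Pi.names]), hg.2⟩
    · exact .inl ⟨hv, fun h => (hnv _ (by simp [Pi.names, Pi.bn_subset_names P h])).false⟩
    · exact .inr rfl

lemma ac3_dtrans_out {P : Pi} {u x v c : ℕ} (hP : AC3 (dtrans P (c + 3) (c + 4)).1)
    (hd : Disjoint (Pi.out u x P).bn (Pi.out u x P).fn)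
    (hnv : ∀ y ∈ (Pi.out u x P).names, y < v) (hv : v < c) :
    AC3 (dtrans (.out u x P) v c).1 := by
  have hn : ∀ y ∈ (Pi.out u x P).names, y < c := fun y hy => (hnv y hy).trans hv
  simp only [Pi.bn, Pi.fn, Finset.disjoint_left, Finset.mem_insert] at hd
  refine ac3_dtrans_prefix hP (fun y hy => hn y (by simp [Pi.names, hy]))
    (hn u (by simp [Pi.names])) (fun h => hd h (.inl rfl)) (by simp) ?_ ?_
  · intro y hy; simp at hy; omega
  · intro y hy
    simp only [Solo.objOcc_mk] at hy
    rcases hy with rfl | rfl | rfl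
    · exact .inl ⟨hn _ (by simp [Pi.names]), fun h => hd h (.inr (.inl rfl))⟩
    · exact .inr rfl
    · exact .inl ⟨hv, fun h => (hnv _ (by simp [Pi.names, Pi.bn_subset_names P h])).false⟩

lemma not_objOcc_of_hasR_dtrans {P Q : Pi} {v c c' : ℕ} {s t : Solo}
    (hs : s ∈ (dtrans P v c).1.solos) (ht : t ∈ (dtrans Q v c').1.solos)
    (hPQ : Disjoint P.bn Q.names) (hvP : v ∉ P.bn) (hP : ∀ y ∈ P.bn, y < c')
    (hQ : ∀ y ∈ Q.names, y < c) (hv : v < c) (hk : (dtrans P v c).2 ≤ c' ∨ (dtrans Q v c').2 ≤ c)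
    {y : ℕ} (hy : s.hasR y) : ¬ t.objOcc y := by
  intro hO
  rcases hasR_dtrans hs hy with h | h <;> rcases objOcc_dtrans ht hO with h' | h' | rfl
  · exact Finset.disjoint_left.1 hPQ h h'
  · have := hP y h; omega
  · exact hvP h
  · have := hQ y h'; omega
  · omega
  · omega

lemma ac3_dtrans {P : Pi} {v c : ℕ} (hg : P.Good) (hd : Disjoint P.bn P.fn)
    (hnv : ∀ x ∈ P.names, x < v) (hv : v < c) : AC3 (dtrans P v c).1 := by
  induction P generalizing v c with
  | nil => simp [AC3, dtrans]
  | inp u x P ih =>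
    refine ac3_dtrans_inp (ih hg.1 ?_ (fun y hy => (hnv y (by simp [Pi.names, hy])).trans
      (by omega)) (by omega)) hg hd hnv hv
    simp only [Pi.bn, Pi.fn, Finset.disjoint_left, Finset.mem_insert, Finset.mem_erase] at hd
    exact Finset.disjoint_left.2 fun y hy hy' => hd (.inr hy) (.inr ⟨fun h => hg.2 (h ▸ hy), hy'⟩)
  | out u x P ih =>
    refine ac3_dtrans_out (ih hg (Finset.disjoint_of_subset_right ?_ hd)
      (fun y hy => (hnv y (by simp [Pi.names, hy])).trans (by omega)) (by omega)) hd hnv hv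
    exact (Finset.subset_insert _ _).trans (Finset.subset_insert _ _)
  | par P Q ihP ihQ =>
    obtain ⟨hgP, hgQ, hPQ, hPQf, hQPf⟩ := hg
    simp only [Pi.bn, Pi.fn, Finset.disjoint_union_left, Finset.disjoint_union_right] at hd
    have hnP : ∀ y ∈ P.names, y < v := fun y hy => hnv y (by simp [Pi.names, hy])
    have hnQ : ∀ y ∈ Q.names, y < v := fun y hy => hnv y (by simp [Pi.names, hy])
    have hk := le_dtrans_snd P v c
    refine CTerm.ac3_add (ihP hgP hd.1.1 hnP hv) (ihQ hgQ hd.2.2 hnQ (hv.trans_le hk)) ?_ ?_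
    · intro s hs y hy t ht
      exact not_objOcc_of_hasR_dtrans hs ht (Pi.disjoint_names hPQf hPQ)
        (fun h => (hnP v (Pi.bn_subset_names P h)).false)
        (fun y h => ((hnP y (Pi.bn_subset_names P h)).trans hv).trans_le hk)
        (fun y h => (hnQ y h).trans hv) hv (.inl le_rfl) hy
    · intro s hs y hy t ht
      exact not_objOcc_of_hasR_dtrans hs ht (Pi.disjoint_names hQPf hPQ.symm)
        (fun h => (hnQ v (Pi.bn_subset_names Q h)).false)
        (fun y h => (hnQ y (Pi.bn_subset_names Q h)).trans hv)
        (fun y h => ((hnP y h).trans hv).trans_le hk) (hv.trans_le hk) (.inr le_rfl) hy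
  | nu x P ih =>
    refine ih hg.1 ?_ (fun y hy => hnv y (by simp [Pi.names, hy])) hv
    simp only [Pi.bn, Pi.fn, Finset.disjoint_left, Finset.mem_insert, Finset.mem_erase] at hd
    exact Finset.disjoint_left.2 fun y hy hy' => hd (.inr hy) ⟨fun h => hg.2 (h ▸ hy), hy'⟩

/-- Acyclicity for the π-calculus: for every finitary monadic
π-term `P` (with suitably distinct names), the translation
`⟦P⟧ = (νv)(⟦P⟧_v | C(v))` is an acyclic solos term, i.e. it satisfies
conditions (AC1)–(AC5). -/
theorem stmt17 (P : Pi) (c : ℕ) (hg : P.Good) (hbf : Disjoint P.bn P.fn)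
    (hc : ∀ x ∈ P.names, x < c) :
    Acyclic (dtransTop P c) := by
  have hn : ∀ x ∈ P.names, x < c + 2 := fun x hx => (hc x hx).trans (by omega)
  refine acyclic_catSolo_cons (by omega) (ac1_dtrans hg hn) (ac3_dtrans hg hbf hc (by omega))
    (ac4_dtrans (by omega) hn) (fun s hs t ht => not_dual_dtrans (by omega) hs ht) ?_ ?_
  · intro s hs y hy
    refine ⟨mem_dtrans_bound (hasR_dtrans hs hy), ?_⟩
    rcases hasR_dtrans hs hy with h | h
    · have := hc y (Pi.bn_subset_names P h); omega
    · omega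
  · intro s hs hO
    rcases objOcc_dtrans hs hO with h | h | h
    · have := hc _ h; omega
    · omega
    · omega
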